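/- In the bigraded Weil algebra 𝔄(g), setting 𝒜 = A + α and ℱ = F + ψ + φ, one has the total structure equation (d+δ)𝒜 + ½[𝒜,𝒜] = ℱ and the total Bianchi identity (d+δ)ℱ + [𝒜,ℱ] = 0. -/

import Mathlib

open scoped TensorProduct

noncomputable section

/-- The graded bracket on `g ⊗ Ω` induced by `[X⊗P, Y⊗Q] = ⁅X,Y⁆ ⊗ (P*Q)`. -/
def gaBracket (g : Type) [LieRing g] [LieAlgebra ℂ g] (Ω : Type) [Ring Ω] [Algebra ℂ Ω] :
    (g ⊗[ℂ] Ω) →ₗ[ℂ] (g ⊗[ℂ] Ω) →ₗ[ℂ] (g ⊗[ℂ] Ω) :=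
  TensorProduct.map₂
    (LinearMap.mk₂ ℂ (fun X Y => ⁅X, Y⁆)
      (by intros; simp [add_lie]) (by intros; simp [smul_lie])
      (by intros; simp [lie_add]) (by intros; simp [lie_smul]))
    (LinearMap.mul ℂ Ω)

/-- The submodule of `g ⊗ Ω` of `g`-valued elements with components in a submodule `S` of `Ω`. -/
def gvSub (g : Type) [LieRing g] [LieAlgebra ℂ g] {Ω : Type} [AddCommGroup Ω] [Module ℂ Ω]
    (S : Submodule ℂ Ω) : Submodule ℂ (g ⊗[ℂ] Ω) :=
  LinearMap.range (LinearMap.lTensor g S.subtype)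

/-- A bigraded-commutative algebra structure on `Ω` given by bidegree pieces `gr k l`. -/
def IsBigradedCommAlg (Ω : Type) [Ring Ω] [Algebra ℂ Ω] (gr : ℕ → ℕ → Submodule ℂ Ω) : Prop :=
  (1 : Ω) ∈ gr 0 0 ∧
  (∀ k l m n, ∀ a ∈ gr k l, ∀ b ∈ gr m n, a * b ∈ gr (k + m) (l + n)) ∧
  (∀ k l m n, ∀ a ∈ gr k l, ∀ b ∈ gr m n,
      a * b = ((-1 : ℂ)) ^ ((k + l) * (m + n)) • (b * a)) ∧
  DirectSum.IsInternal (fun p : ℕ × ℕ => gr p.1 p.2)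

/-- An antiderivation with respect to the total degree of a bigrading. -/
def IsAntideriv {Ω : Type} [Ring Ω] [Algebra ℂ Ω] (gr : ℕ → ℕ → Submodule ℂ Ω)
    (R : Ω →ₗ[ℂ] Ω) : Prop :=
  ∀ k l, ∀ a ∈ gr k l, ∀ b, R (a * b) = R a * b + ((-1 : ℂ)) ^ (k + l) • (a * R b)

/-- The bigraded Weil algebra data: a bigraded-commutative differential algebra with
differentials `d`, `δ` of bidegrees `(1,0)`, `(0,1)` and `g`-valued generators
`A, α, F, φ, ψ, ξ, B, β` satisfying the structure equations of Lemma 1.1. -/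
structure BigradedWeil (g : Type) [LieRing g] [LieAlgebra ℂ g]
    (𝔄 : Type) [Ring 𝔄] [Algebra ℂ 𝔄] where
  gr : ℕ → ℕ → Submodule ℂ 𝔄
  graded : IsBigradedCommAlg 𝔄 gr
  d : 𝔄 →ₗ[ℂ] 𝔄
  δ : 𝔄 →ₗ[ℂ] 𝔄
  d_antideriv : IsAntideriv gr d
  δ_antideriv : IsAntideriv gr δ
  d_gr : ∀ k l, ∀ x ∈ gr k l, d x ∈ gr (k + 1) l
  δ_gr : ∀ k l, ∀ x ∈ gr k l, δ x ∈ gr k (l + 1)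
  d_sq : ∀ x, d (d x) = 0
  δ_sq : ∀ x, δ (δ x) = 0
  d_δ : ∀ x, d (δ x) + δ (d x) = 0
  A : g ⊗[ℂ] 𝔄
  α : g ⊗[ℂ] 𝔄
  F : g ⊗[ℂ] 𝔄
  φ : g ⊗[ℂ] 𝔄
  ψ : g ⊗[ℂ] 𝔄
  ξ : g ⊗[ℂ] 𝔄
  B : g ⊗[ℂ] 𝔄
  β : g ⊗[ℂ] 𝔄
  A_mem : A ∈ gvSub g (gr 1 0)
  α_mem : α ∈ gvSub g (gr 0 1)
  F_mem : F ∈ gvSub g (gr 2 0)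
  φ_mem : φ ∈ gvSub g (gr 0 2)
  ψ_mem : ψ ∈ gvSub g (gr 1 1)
  ξ_mem : ξ ∈ gvSub g (gr 1 1)
  B_mem : B ∈ gvSub g (gr 2 1)
  β_mem : β ∈ gvSub g (gr 1 2)
  eqF : F = LinearMap.lTensor g d A + (2⁻¹ : ℂ) • gaBracket g 𝔄 A A
  eqφ : φ = LinearMap.lTensor g δ α + (2⁻¹ : ℂ) • gaBracket g 𝔄 α α
  eqψ : ψ = LinearMap.lTensor g δ A + LinearMap.lTensor g d α + gaBracket g 𝔄 A α
  eqξ : ξ = LinearMap.lTensor g δ A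
  eqB : B = LinearMap.lTensor g δ F + gaBracket g 𝔄 α F
  eqβ : β = LinearMap.lTensor g d φ + gaBracket g 𝔄 A φ

/-- The universal property expressing that the bigraded-commutative algebra `𝔄` is free on
the given list of `g`-valued generators with the given bidegrees. -/
def FreeOn (g : Type) [LieRing g] [LieAlgebra ℂ g] {𝔄 : Type} [Ring 𝔄] [Algebra ℂ 𝔄]
    (gr : ℕ → ℕ → Submodule ℂ 𝔄) {m : ℕ} (gens : Fin m → (ℕ × ℕ) × (g ⊗[ℂ] 𝔄)) : Prop :=
  ∀ (Ω : Type) [Ring Ω] [Algebra ℂ Ω] (grΩ : ℕ → ℕ → Submodule ℂ Ω),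
    IsBigradedCommAlg Ω grΩ →
    ∀ v : Fin m → g ⊗[ℂ] Ω,
      (∀ j, v j ∈ gvSub g (grΩ (gens j).1.1 (gens j).1.2)) →
      ∃! h : 𝔄 →ₐ[ℂ] Ω,
        (∀ k l, ∀ x ∈ gr k l, h x ∈ grΩ k l) ∧
        ∀ j, LinearMap.lTensor g h.toLinearMap (gens j).2 = v j

/-- The list of generators of the bigraded Weil algebra with their bidegrees. -/
def BigradedWeil.gens {g : Type} [LieRing g] [LieAlgebra ℂ g] {𝔄 : Type} [Ring 𝔄]
    [Algebra ℂ 𝔄] (W : BigradedWeil g 𝔄) : Fin 8 → (ℕ × ℕ) × (g ⊗[ℂ] 𝔄) :=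
  ![((1, 0), W.A), ((0, 1), W.α), ((2, 0), W.F), ((0, 2), W.φ),
    ((1, 1), W.ψ), ((1, 1), W.ξ), ((2, 1), W.B), ((1, 2), W.β)]

/-- The `i`-th component in `𝔄` of a `g`-valued element of `g ⊗ 𝔄`, w.r.t. a basis of `g`. -/
def coordEv {g : Type} [LieRing g] [LieAlgebra ℂ g] {ι : Type} (b : Module.Basis ι ℂ g)
    {𝔄 : Type} [Ring 𝔄] [Algebra ℂ 𝔄] (i : ι) : g ⊗[ℂ] 𝔄 →ₗ[ℂ] 𝔄 :=
  (TensorProduct.lid ℂ 𝔄).toLinearMap ∘ₗ LinearMap.rTensor 𝔄 (b.coord i)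

/-- Evaluation of a multilinear form `I` on `g` on `g`-valued elements `Z j ∈ g ⊗ 𝔄`,
multiplying the `𝔄`-components in order. -/
def multiEval {g : Type} [LieRing g] [LieAlgebra ℂ g] {ι : Type} [Fintype ι]
    (b : Module.Basis ι ℂ g) {𝔄 : Type} [Ring 𝔄] [Algebra ℂ 𝔄] {n : ℕ}
    (I : MultilinearMap ℂ (fun _ : Fin n => g) ℂ) (Z : Fin n → g ⊗[ℂ] 𝔄) : 𝔄 :=
  ∑ iv : Fin n → ι, I (fun j => b (iv j)) • (List.ofFn fun j => coordEv b (iv j) (Z j)).prod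

/-- `ad`-invariance of a multilinear form on `g`. -/
def IsInvForm {g : Type} [LieRing g] [LieAlgebra ℂ g] {n : ℕ}
    (I : MultilinearMap ℂ (fun _ : Fin n => g) ℂ) : Prop :=
  ∀ (X : g) (v : Fin n → g), ∑ j, I (Function.update v j ⁅v j, X⁆) = 0

/-- Symmetry of a multilinear form on `g`. -/
def IsSymForm {g : Type} [LieRing g] [LieAlgebra ℂ g] {n : ℕ}
    (I : MultilinearMap ℂ (fun _ : Fin n => g) ℂ) : Prop :=
  ∀ (σ : Equiv.Perm (Fin n)) (v : Fin n → g), I (fun j => v (σ j)) = I v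

/-- The five `g`-valued elements `F, ψ, φ, B, β` of the bigraded Weil algebra. -/
def BigradedWeil.genOf {g : Type} [LieRing g] [LieAlgebra ℂ g] {𝔄 : Type} [Ring 𝔄]
    [Algebra ℂ 𝔄] (W : BigradedWeil g 𝔄) : Fin 5 → g ⊗[ℂ] 𝔄 :=
  ![W.F, W.ψ, W.φ, W.B, W.β]

/-- The base `ℬ(g) ⊆ 𝔄(g)`: the span of the invariant "polynomials" `𝓘(F,ψ,φ,B,β)`. -/
def baseB {g : Type} [LieRing g] [LieAlgebra ℂ g] {ι : Type} [Fintype ι] (b : Module.Basis ι ℂ g)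
    {𝔄 : Type} [Ring 𝔄] [Algebra ℂ 𝔄] (W : BigradedWeil g 𝔄) : Submodule ℂ 𝔄 :=
  Submodule.span ℂ { x | ∃ (n : ℕ) (I : MultilinearMap ℂ (fun _ : Fin n => g) ℂ)
      (c : Fin n → Fin 5), IsInvForm I ∧ x = multiEval b I (fun j => W.genOf (c j)) }

end

/-!
Put `D = d + δ` and `𝒜 = A + α`. Since `d` and `δ` are anticommuting differentials, `D` is a
differential and an antiderivation for the total degree, and `𝒜` is odd. Expanding `F`, `ψ`, `φ`
gives the structure equation `D𝒜 + ½[𝒜,𝒜] = ℱ`, the only point being `[α,A] = [A,α]`.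
The Bianchi identity holds for the curvature of any odd `g`-valued element of a
graded-commutative differential algebra: `Dℱ = ½([D𝒜,𝒜] - [𝒜,D𝒜]) = -[𝒜,D𝒜]` because `D² = 0`
and `D𝒜` is even, while `[𝒜,ℱ] = [𝒜,D𝒜] + ½[𝒜,[𝒜,𝒜]]` and `[𝒜,[𝒜,𝒜]] = -[[𝒜,𝒜],𝒜]`
vanishes by the graded Jacobi identity.
-/

section TotalDegree

variable {Ω : Type} [Ring Ω] [Algebra ℂ Ω] {gr : ℕ → ℕ → Submodule ℂ Ω}

def totDeg (gr : ℕ → ℕ → Submodule ℂ Ω) (n : ℕ) : Submodule ℂ Ω :=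
  ⨆ p : {p : ℕ × ℕ // p.1 + p.2 = n}, gr p.1.1 p.1.2

lemma le_totDeg {k l n : ℕ} (h : k + l = n) : gr k l ≤ totDeg gr n :=
  le_iSup_of_le (f := fun p : {p : ℕ × ℕ // p.1 + p.2 = n} => gr p.1.1 p.1.2) ⟨(k, l), h⟩ le_rfl

lemma totDeg_induction {n : ℕ} {P : Ω → Prop} (hgr : ∀ k l, k + l = n → ∀ a ∈ gr k l, P a)
    (h0 : P 0) (hadd : ∀ a b, P a → P b → P (a + b)) : ∀ a ∈ totDeg gr n, P a :=
  fun _ ha => Submodule.iSup_induction (motive := P) _ ha (fun p => hgr _ _ p.2) h0 hadd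

lemma IsBigradedCommAlg.mul_mem_totDeg (hgr : IsBigradedCommAlg Ω gr) {m n : ℕ} :
    ∀ a ∈ totDeg gr m, ∀ b ∈ totDeg gr n, a * b ∈ totDeg gr (m + n) := by
  refine totDeg_induction (fun k l hkl a ha => ?_) (by simp) fun a a' ha ha' b hb => ?_
  · refine totDeg_induction (fun k' l' hkl' b hb => ?_) (by simp) fun b b' hb hb' => ?_
    · exact le_totDeg (by omega) (hgr.2.1 k l k' l' a ha b hb)
    · rw [mul_add]; exact add_mem hb hb'
  · rw [add_mul]; exact add_mem (ha b hb) (ha' b hb)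

lemma IsBigradedCommAlg.mul_comm_of_mem_totDeg (hgr : IsBigradedCommAlg Ω gr) {m n : ℕ} :
    ∀ a ∈ totDeg gr m, ∀ b ∈ totDeg gr n, a * b = (-1 : ℂ) ^ (m * n) • (b * a) := by
  refine totDeg_induction (fun k l hkl a ha => ?_) (by simp) fun a a' ha ha' b hb => ?_
  · refine totDeg_induction (fun k' l' hkl' b hb => ?_) (by simp) fun b b' hb hb' => ?_
    · rw [← hkl, ← hkl']; exact hgr.2.2.1 k l k' l' a ha b hb
    · rw [mul_add, hb, hb', add_mul, smul_add]
  · rw [add_mul, ha b hb, ha' b hb, mul_add, smul_add]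

lemma IsAntideriv.add {R R' : Ω →ₗ[ℂ] Ω} (hR : IsAntideriv gr R) (hR' : IsAntideriv gr R') :
    IsAntideriv gr (R + R') := by
  intro k l a ha b
  simp only [LinearMap.add_apply, hR k l a ha b, hR' k l a ha b, add_mul, mul_add, smul_add]
  abel

lemma IsAntideriv.map_mul_of_mem_totDeg {R : Ω →ₗ[ℂ] Ω} (hR : IsAntideriv gr R) {n : ℕ} :
    ∀ a ∈ totDeg gr n, ∀ b, R (a * b) = R a * b + (-1 : ℂ) ^ n • (a * R b) := by
  refine totDeg_induction (fun k l hkl a ha b => ?_) (by simp) fun a a' ha ha' b => ?_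
  · rw [← hkl]; exact hR k l a ha b
  · simp only [add_mul, map_add, ha b, ha' b, smul_add]
    abel

end TotalDegree

section GValued

variable {g : Type} [LieRing g] [LieAlgebra ℂ g] {𝔄 : Type} [Ring 𝔄] [Algebra ℂ 𝔄]

lemma gaBracket_tmul (X Y : g) (a b : 𝔄) :
    gaBracket g 𝔄 (X ⊗ₜ[ℂ] a) (Y ⊗ₜ[ℂ] b) = ⁅X, Y⁆ ⊗ₜ[ℂ] (a * b) := by
  simp [gaBracket]

lemma tmul_mem_gvSub {S : Submodule ℂ 𝔄} (X : g) {a : 𝔄} (ha : a ∈ S) :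
    X ⊗ₜ[ℂ] a ∈ gvSub g S :=
  ⟨X ⊗ₜ[ℂ] (⟨a, ha⟩ : S), by simp⟩

lemma gvSub_induction {S : Submodule ℂ 𝔄} {P : g ⊗[ℂ] 𝔄 → Prop}
    (htmul : ∀ (X : g) (a : 𝔄), a ∈ S → P (X ⊗ₜ[ℂ] a))
    (h0 : P 0) (hadd : ∀ x y, P x → P y → P (x + y)) :
    ∀ Z ∈ gvSub g S, P Z := by
  rintro Z ⟨z, rfl⟩
  induction z using TensorProduct.induction_on with
  | zero => simpa using h0
  | tmul X s => simpa using htmul X s.1 s.2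
  | add x y hx hy => rw [map_add]; exact hadd _ _ hx hy

lemma gvSub_mono {S S' : Submodule ℂ 𝔄} (h : S ≤ S') : gvSub g S ≤ gvSub g S' :=
  fun Z => gvSub_induction (fun X _ ha => tmul_mem_gvSub X (h ha)) (zero_mem _)
    (fun _ _ => add_mem) Z

lemma lTensor_mem_gvSub {S S' : Submodule ℂ 𝔄} {R : 𝔄 →ₗ[ℂ] 𝔄}
    (hR : ∀ a ∈ S, R a ∈ S') :
    ∀ Z ∈ gvSub g S, LinearMap.lTensor g R Z ∈ gvSub g S' := by
  refine gvSub_induction (fun X a ha => ?_) (by simp) fun x y hx hy => ?_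
  · rw [LinearMap.lTensor_tmul]; exact tmul_mem_gvSub X (hR a ha)
  · rw [map_add]; exact add_mem hx hy

lemma gaBracket_mem_gvSub {S S' S'' : Submodule ℂ 𝔄}
    (h : ∀ a ∈ S, ∀ b ∈ S', a * b ∈ S'') :
    ∀ Z ∈ gvSub g S, ∀ Z' ∈ gvSub g S', gaBracket g 𝔄 Z Z' ∈ gvSub g S'' := by
  refine gvSub_induction (fun X a ha => ?_) (by simp) fun x y hx hy Z' hZ' => ?_
  · refine gvSub_induction (fun Y b hb => ?_) (by simp) fun u v hu hv => ?_
    · rw [gaBracket_tmul]; exact tmul_mem_gvSub _ (h a ha b hb)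
    · rw [map_add]; exact add_mem hu hv
  · rw [map_add, LinearMap.add_apply]; exact add_mem (hx Z' hZ') (hy Z' hZ')

lemma gaBracket_comm {S S' : Submodule ℂ 𝔄} {ε : ℂ}
    (h : ∀ a ∈ S, ∀ b ∈ S', a * b = ε • (b * a)) :
    ∀ Z ∈ gvSub g S, ∀ Z' ∈ gvSub g S',
      gaBracket g 𝔄 Z Z' = (-ε) • gaBracket g 𝔄 Z' Z := by
  refine gvSub_induction (fun X a ha => ?_) (by simp) fun x y hx hy Z' hZ' => ?_
  · refine gvSub_induction (fun Y b hb => ?_) (by simp) fun u v hu hv => ?_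
    · rw [gaBracket_tmul, gaBracket_tmul, h a ha b hb, ← lie_skew Y X,
        TensorProduct.tmul_smul, TensorProduct.neg_tmul, neg_smul, smul_neg, neg_neg]
    · rw [map_add, hu, hv, map_add, LinearMap.add_apply, smul_add]
  · rw [map_add, LinearMap.add_apply, hx Z' hZ', hy Z' hZ', map_add, smul_add]

lemma lTensor_gaBracket {S : Submodule ℂ 𝔄} {R : 𝔄 →ₗ[ℂ] 𝔄} {ε : ℂ}
    (h : ∀ a ∈ S, ∀ b, R (a * b) = R a * b + ε • (a * R b)) :
    ∀ Z ∈ gvSub g S, ∀ Z',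
      LinearMap.lTensor g R (gaBracket g 𝔄 Z Z')
        = gaBracket g 𝔄 (LinearMap.lTensor g R Z) Z'
          + ε • gaBracket g 𝔄 Z (LinearMap.lTensor g R Z') := by
  refine gvSub_induction (fun X a ha Z' => ?_) (by simp) fun x y hx hy Z' => ?_
  · induction Z' using TensorProduct.induction_on with
    | zero => simp
    | tmul Y b =>
      simp only [gaBracket_tmul, LinearMap.lTensor_tmul, h a ha b,
        TensorProduct.tmul_add, TensorProduct.tmul_smul]
    | add u v hu hv =>
      simp only [map_add, hu, hv, smul_add]
      abel
  · simp only [map_add, LinearMap.add_apply, hx Z', hy Z', smul_add]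
    abel

lemma gaBracket_jacobi {S : Submodule ℂ 𝔄}
    (hS : ∀ a ∈ S, ∀ b ∈ S, a * b = -(b * a)) :
    ∀ Z₁ ∈ gvSub g S, ∀ Z₂ ∈ gvSub g S, ∀ Z₃ ∈ gvSub g S,
      gaBracket g 𝔄 (gaBracket g 𝔄 Z₁ Z₂) Z₃ + gaBracket g 𝔄 (gaBracket g 𝔄 Z₂ Z₃) Z₁
        + gaBracket g 𝔄 (gaBracket g 𝔄 Z₃ Z₁) Z₂ = 0 := by
  refine gvSub_induction (fun X a ha => ?_) (by simp) fun x y hx hy Z₂ h₂ Z₃ h₃ => ?_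
  · refine gvSub_induction (fun Y b hb => ?_) (by simp) fun x y hx hy Z₃ h₃ => ?_
    · refine gvSub_induction (fun Z c hc => ?_) (by simp) fun x y hx hy => ?_
      · have e₁ : b * c * a = a * b * c := by
          rw [mul_assoc, hS c hc a ha, mul_neg, ← mul_assoc, hS b hb a ha, neg_mul, neg_neg]
        have e₂ : c * a * b = a * b * c := by
          rw [hS c hc a ha, neg_mul, mul_assoc, hS c hc b hb, mul_neg, neg_neg, mul_assoc]
        simp only [gaBracket_tmul, e₁, e₂, ← TensorProduct.add_tmul]
        rw [← lie_skew ⁅X, Y⁆ Z, ← lie_skew ⁅Y, Z⁆ X, ← lie_skew ⁅Z, X⁆ Y,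
          ← neg_add, ← neg_add, lie_jacobi, neg_zero, TensorProduct.zero_tmul]
      · simp only [map_add, LinearMap.add_apply] at hx hy ⊢
        linear_combination (norm := abel) hx + hy
    · have Hx := hx Z₃ h₃
      have Hy := hy Z₃ h₃
      simp only [map_add, LinearMap.add_apply] at Hx Hy ⊢
      linear_combination (norm := abel) Hx + Hy
  · have Hx := hx Z₂ h₂ Z₃ h₃
    have Hy := hy Z₂ h₂ Z₃ h₃
    simp only [map_add, LinearMap.add_apply] at Hx Hy ⊢
    linear_combination (norm := abel) Hx + Hy

lemma gaBracket_gaBracket_self {S : Submodule ℂ 𝔄}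
    (hS : ∀ a ∈ S, ∀ b ∈ S, a * b = -(b * a)) {Z : g ⊗[ℂ] 𝔄} (hZ : Z ∈ gvSub g S) :
    gaBracket g 𝔄 (gaBracket g 𝔄 Z Z) Z = 0 := by
  have h₃ : (3 : ℂ) • gaBracket g 𝔄 (gaBracket g 𝔄 Z Z) Z = 0 := by
    linear_combination (norm := module) gaBracket_jacobi hS Z hZ Z hZ Z hZ
  exact (smul_eq_zero.mp h₃).resolve_left (by norm_num)

theorem bianchi_identity {gr : ℕ → ℕ → Submodule ℂ 𝔄} (hgr : IsBigradedCommAlg 𝔄 gr)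
    {D : 𝔄 →ₗ[ℂ] 𝔄} (hD : IsAntideriv gr D) (hD_mem : ∀ a ∈ totDeg gr 1, D a ∈ totDeg gr 2)
    (hDD : ∀ x, D (D x) = 0) {Z : g ⊗[ℂ] 𝔄} (hZ : Z ∈ gvSub g (totDeg gr 1)) :
    LinearMap.lTensor g D (LinearMap.lTensor g D Z + (2⁻¹ : ℂ) • gaBracket g 𝔄 Z Z)
      + gaBracket g 𝔄 Z (LinearMap.lTensor g D Z + (2⁻¹ : ℂ) • gaBracket g 𝔄 Z Z) = 0 := by
  have hDZ : LinearMap.lTensor g D Z ∈ gvSub g (totDeg gr 2) := lTensor_mem_gvSub hD_mem Z hZ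
  have hZZ : gaBracket g 𝔄 Z Z ∈ gvSub g (totDeg gr 2) :=
    gaBracket_mem_gvSub (hgr.mul_mem_totDeg (m := 1) (n := 1)) Z hZ Z hZ
  have hDDZ : LinearMap.lTensor g D (LinearMap.lTensor g D Z) = 0 := by
    rw [← LinearMap.lTensor_comp_apply, (LinearMap.ext hDD : D ∘ₗ D = 0),
      LinearMap.lTensor_zero, LinearMap.zero_apply]
  have hleib := lTensor_gaBracket hD.map_mul_of_mem_totDeg Z hZ Z
  have hDZ_Z := gaBracket_comm (hgr.mul_comm_of_mem_totDeg (m := 2) (n := 1)) _ hDZ Z hZ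
  have hZ_ZZ := gaBracket_comm (hgr.mul_comm_of_mem_totDeg (m := 1) (n := 2)) Z hZ _ hZZ
  have hZZZ := gaBracket_gaBracket_self
    (fun a ha b hb => by simpa using hgr.mul_comm_of_mem_totDeg (m := 1) (n := 1) a ha b hb) hZ
  simp only [map_add, map_smul, hDDZ, hleib, hDZ_Z, hZ_ZZ, hZZZ]
  module

end GValued

namespace BigradedWeil

variable {g : Type} [LieRing g] [LieAlgebra ℂ g] {𝔄 : Type} [Ring 𝔄] [Algebra ℂ 𝔄]
  (W : BigradedWeil g 𝔄)

lemma d_add_δ_mem_totDeg {n : ℕ} : ∀ a ∈ totDeg W.gr n, (W.d + W.δ) a ∈ totDeg W.gr (n + 1) := by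
  refine totDeg_induction (fun k l hkl a ha => ?_) (by simp) fun a b ha hb => ?_
  · exact add_mem (le_totDeg (by omega) (W.d_gr k l a ha))
      (le_totDeg (by omega) (W.δ_gr k l a ha))
  · rw [map_add]; exact add_mem ha hb

lemma d_add_δ_sq (x : 𝔄) : (W.d + W.δ) ((W.d + W.δ) x) = 0 := by
  simp only [LinearMap.add_apply, map_add, W.d_sq, W.δ_sq, zero_add, add_zero]
  rw [add_comm]; exact W.d_δ x

lemma gaBracket_α_A : gaBracket g 𝔄 W.α W.A = gaBracket g 𝔄 W.A W.α := by
  have h : ∀ a ∈ W.gr 0 1, ∀ b ∈ W.gr 1 0, a * b = (-1 : ℂ) • (b * a) :=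
    fun a ha b hb => by simpa using W.graded.2.2.1 0 1 1 0 a ha b hb
  simpa using gaBracket_comm h W.α W.α_mem W.A W.A_mem

end BigradedWeil

theorem stmt_6_general (g : Type) [LieRing g] [LieAlgebra ℂ g]
    (𝔄 : Type) [Ring 𝔄] [Algebra ℂ 𝔄] (W : BigradedWeil g 𝔄) :
    LinearMap.lTensor g (W.d + W.δ) (W.A + W.α)
        + (2⁻¹ : ℂ) • gaBracket g 𝔄 (W.A + W.α) (W.A + W.α) = W.F + W.ψ + W.φ ∧
    LinearMap.lTensor g (W.d + W.δ) (W.F + W.ψ + W.φ)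
        + gaBracket g 𝔄 (W.A + W.α) (W.F + W.ψ + W.φ) = 0 := by
  have hstruct : LinearMap.lTensor g (W.d + W.δ) (W.A + W.α)
      + (2⁻¹ : ℂ) • gaBracket g 𝔄 (W.A + W.α) (W.A + W.α) = W.F + W.ψ + W.φ := by
    rw [W.eqF, W.eqψ, W.eqφ]
    simp only [LinearMap.lTensor_add, LinearMap.add_apply, map_add, W.gaBracket_α_A]
    module
  have h𝒜 : W.A + W.α ∈ gvSub g (totDeg W.gr 1) :=
    add_mem (gvSub_mono (le_totDeg (k := 1) (l := 0) rfl) W.A_mem)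
      (gvSub_mono (le_totDeg (k := 0) (l := 1) rfl) W.α_mem)
  refine ⟨hstruct, ?_⟩
  rw [← hstruct]
  exact bianchi_identity W.graded (W.d_antideriv.add W.δ_antideriv)
    W.d_add_δ_mem_totDeg W.d_add_δ_sq h𝒜

/-- with `𝒜 = A + α` and `ℱ = F + ψ + φ`, one has
`(d+δ)𝒜 + ½[𝒜,𝒜] = ℱ` and `(d+δ)ℱ + [𝒜,ℱ] = 0`. -/
theorem stmt_6 (g : Type) [LieRing g] [LieAlgebra ℂ g] [FiniteDimensional ℂ g]
    (𝔄 : Type) [Ring 𝔄] [Algebra ℂ 𝔄] (W : BigradedWeil g 𝔄) :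
    LinearMap.lTensor g (W.d + W.δ) (W.A + W.α)
        + (2⁻¹ : ℂ) • gaBracket g 𝔄 (W.A + W.α) (W.A + W.α) = W.F + W.ψ + W.φ ∧
    LinearMap.lTensor g (W.d + W.δ) (W.F + W.ψ + W.φ)
        + gaBracket g 𝔄 (W.A + W.α) (W.F + W.ψ + W.φ) = 0 :=
  stmt_6_general g 𝔄 W
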